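/- arXiv:2410.23273 — 2 statements merged into one kernel-verified Lean document; each statement's English description precedes it below -/
import Mathlib

section
/- For any n agents with arbitrary nonnegative loss functions and any number of clusters k with 1 ≤ k ≤ n, there exists a k-clustering that satisfies (exact, i.e. 1-)FJR. -/
open scoped Classical

/-- The maximum of `f` over the finite set `S` (`0` if `S` is empty). -/
noncomputable def maxOver {ι : Type*} (S : Finset ι) (f : ι → ℝ) : ℝ :=
  if h : S.Nonempty then S.sup' h f else 0

/-- The minimum of `f` over the finite set `S` (`0` if `S` is empty). -/
noncomputable def minOver {ι : Type*} (S : Finset ι) (f : ι → ℝ) : ℝ :=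
  if h : S.Nonempty then S.inf' h f else 0

/-- The cluster containing agent `i` under the clustering (assignment) `C`. -/
def clusterOf {n k : ℕ} (C : Fin n → Fin k) (i : Fin n) : Finset (Fin n) :=
  Finset.univ.filter (fun j => C j = C i)

/-- The average loss of agent `i` in cluster `S`. -/
noncomputable def avgLoss {n : ℕ} (d : Fin n → Fin n → ℝ) (i : Fin n)
    (S : Finset (Fin n)) : ℝ :=
  (∑ j ∈ S, d i j) / (S.card : ℝ)

/-- The maximum loss of agent `i` in cluster `S`. -/
noncomputable def maxLoss {n : ℕ} (d : Fin n → Fin n → ℝ) (i : Fin n)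
    (S : Finset (Fin n)) : ℝ :=
  maxOver S (d i)

/-- `d` is a (pseudo)metric on the agents: zero on the diagonal, symmetric, and
satisfying the triangle inequality. -/
def IsPseudometric {n : ℕ} (d : Fin n → Fin n → ℝ) : Prop :=
  (∀ i, d i i = 0) ∧ (∀ i j, d i j = d j i) ∧ (∀ i j l, d i l ≤ d i j + d j l)

/-- `C` is in the `α`-core: there is no group `S` of at least `n/k` agents such that
`α · ℓ i S < ℓ i (C(i))` for every `i ∈ S`. -/
def InCore {n k : ℕ} (α : ℝ) (ℓ : Fin n → Finset (Fin n) → ℝ) (C : Fin n → Fin k) : Prop :=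
  ¬ ∃ S : Finset (Fin n), (n : ℝ) / k ≤ S.card ∧ ∀ i ∈ S, α * ℓ i S < ℓ i (clusterOf C i)

/-- `C` satisfies `α`-FJR: there is no group `S` of at least `n/k` agents such that
`α · max_{i ∈ S} ℓ i S < min_{j ∈ S} ℓ j (C(j))`. -/
def SatisfiesFJR {n k : ℕ} (α : ℝ) (ℓ : Fin n → Finset (Fin n) → ℝ)
    (C : Fin n → Fin k) : Prop :=
  ¬ ∃ S : Finset (Fin n), (n : ℝ) / k ≤ S.card ∧
      α * maxOver S (fun i => ℓ i S) < minOver S (fun j => ℓ j (clusterOf C j))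

/-!
Greedy capture: repeatedly remove, from the agents not yet clustered, a group of at least
`⌈n/k⌉` of them whose maximal loss is smallest, and put the fewer than `⌈n/k⌉` agents left
at the end into one last cluster; this uses at most `k` clusters. A blocking group `S` meets
some cluster, and the first cluster `T` it meets was chosen while all of `S` was still
available, so the maximal loss in `T` is at most that in `S`. An agent of `S ∩ T` then has
loss at most the maximal loss in `S`, so `S` does not block.
-/

open Finset

lemma minOver_le {ι : Type*} {S : Finset ι} {i : ι} (f : ι → ℝ) (hi : i ∈ S) :
    minOver S f ≤ f i := by
  rw [minOver, dif_pos ⟨i, hi⟩]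
  exact inf'_le f hi

lemma le_maxOver {ι : Type*} {S : Finset ι} {i : ι} (f : ι → ℝ) (hi : i ∈ S) :
    f i ≤ maxOver S f := by
  rw [maxOver, dif_pos ⟨i, hi⟩]
  exact le_sup' f hi

namespace Finpartition

variable {α : Type*} [DecidableEq α]

lemma exists_card_parts_le_one (s : Finset α) : ∃ P : Finpartition s, #P.parts ≤ 1 := by
  rcases s.eq_empty_or_nonempty with rfl | hs
  · exact ⟨Finpartition.empty _, by simp⟩
  · exact ⟨indiscrete hs.ne_empty, by simp⟩

theorem exists_greedy_capture {β : Type*} [LinearOrder β] (f : Finset α → β) {m : ℕ}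
    (hm : 0 < m) (j : ℕ) (R : Finset α) (hR : #R ≤ j * m) :
    ∃ P : Finpartition R, #P.parts ≤ j ∧
      ∀ S ⊆ R, m ≤ #S → ∃ T ∈ P.parts, (S ∩ T).Nonempty ∧ f T ≤ f S := by
  induction j generalizing R with
  | zero =>
    obtain rfl : R = ∅ := card_eq_zero.1 (by simpa using hR)
    refine ⟨Finpartition.empty _, by simp, fun S hS hmS => ?_⟩
    rw [subset_empty.1 hS, card_empty] at hmS
    omega
  | succ j ih =>
    by_cases hmR : m ≤ #R
    · obtain ⟨T₀, hT₀, hT₀min⟩ := exists_min_image {S ∈ R.powerset | m ≤ #S} f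
        ⟨R, by simpa using hmR⟩
      rw [mem_filter, mem_powerset] at hT₀
      have hT₀ne : T₀.Nonempty := card_pos.1 (by omega)
      have hRT₀ : #(R \ T₀) ≤ j * m := by
        rw [card_sdiff_of_subset hT₀.1]; rw [Nat.succ_mul] at hR
        omega
      obtain ⟨P, hPj, hP⟩ := ih (R \ T₀) hRT₀
      refine ⟨P.extend hT₀ne.ne_empty sdiff_disjoint (sdiff_sup_cancel hT₀.1),
        by rw [card_extend]; omega, fun S hS hmS => ?_⟩
      by_cases hST₀ : (S ∩ T₀).Nonempty
      · exact ⟨T₀, by simp, hST₀, hT₀min S (by simp [hS, hmS])⟩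
      · have hSR : S ⊆ R \ T₀ := fun x hx =>
          mem_sdiff.2 ⟨hS hx, fun hxT => hST₀ ⟨x, mem_inter.2 ⟨hx, hxT⟩⟩⟩
        obtain ⟨T, hT, hST, hTS⟩ := hP S hSR hmS
        exact ⟨T, by simp [hT], hST, hTS⟩
    · obtain ⟨P, hP⟩ := exists_card_parts_le_one R
      exact ⟨P, by omega, fun S hS hmS => absurd (hmS.trans (card_le_card hS)) hmR⟩

end Finpartition

lemma exists_clusterOf_eq_part {n k : ℕ} (P : Finpartition (univ : Finset (Fin n)))
    (hP : #P.parts ≤ k) : ∃ C : Fin n → Fin k, ∀ i, clusterOf C i = P.part i := by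
  let e : P.parts ↪ Fin k := P.parts.equivFin.toEmbedding.trans (Fin.castLEEmb hP)
  refine ⟨fun i => e ⟨P.part i, P.part_mem.2 (mem_univ i)⟩, fun i => ?_⟩
  ext j
  simp [clusterOf, e.injective.eq_iff, P.mem_part_iff_part_eq_part]

theorem stmt5_general (n k : ℕ) (hk : 1 ≤ k) (hkn : k ≤ n)
    (ℓ : Fin n → Finset (Fin n) → ℝ) :
    ∃ C : Fin n → Fin k, SatisfiesFJR 1 ℓ C := by
  have hkpos : (0 : ℝ) < k := by exact_mod_cast hk
  set m := ⌈(n : ℝ) / k⌉₊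
  have hm : 0 < m := Nat.ceil_pos.2 (div_pos (by exact_mod_cast hk.trans hkn) hkpos)
  have hnm : #(univ : Finset (Fin n)) ≤ k * m := by
    have : (n : ℝ) ≤ k * m := (div_le_iff₀' hkpos).1 (Nat.le_ceil _)
    simpa using (by exact_mod_cast this : n ≤ k * m)
  obtain ⟨P, hPk, hcapture⟩ :=
    Finpartition.exists_greedy_capture (fun S => maxOver S (fun i => ℓ i S)) hm k univ hnm
  obtain ⟨C, hC⟩ := exists_clusterOf_eq_part P hPk
  refine ⟨C, fun ⟨S, hSn, hblock⟩ => ?_⟩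
  obtain ⟨T, hT, ⟨i, hi⟩, hTS⟩ := hcapture S (subset_univ S) (Nat.ceil_le.2 hSn)
  rw [mem_inter] at hi
  have hCi : clusterOf C i = T := (hC i).trans (P.part_eq_of_mem hT hi.2)
  have : minOver S (fun j => ℓ j (clusterOf C j)) ≤ maxOver S (fun j => ℓ j S) :=
    calc minOver S (fun j => ℓ j (clusterOf C j)) ≤ ℓ i T := hCi ▸ minOver_le _ hi.1
      _ ≤ maxOver T (fun j => ℓ j T) := le_maxOver (fun j => ℓ j T) hi.2
      _ ≤ maxOver S (fun j => ℓ j S) := hTS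
  linarith

/-- For any `n` agents with arbitrary nonnegative loss functions and any `k` with
`1 ≤ k ≤ n`, there exists a `k`-clustering satisfying (exact) FJR. -/
theorem stmt5 (n k : ℕ) (hk : 1 ≤ k) (hkn : k ≤ n)
    (ℓ : Fin n → Finset (Fin n) → ℝ) (hℓ : ∀ i S, i ∈ S → 0 ≤ ℓ i S) :
    ∃ C : Fin n → Fin k, SatisfiesFJR 1 ℓ C :=
  stmt5_general n k hk hkn ℓ
end

section
/- Let λ ≥ 1, let the agents have arbitrary strictly positive loss functions, and let C be any k-clustering. Define the exact FJR approximation of C as ρ = max over all S ⊆ N with |S| ≥ n/k of (min_{j∈S} ℓ_j(C(j))) / (max_{i∈S} ℓ_i(S)). Consider the iterative process: N_1 = N; while |N_t| ≥ n/k, let S_t be any λ-approximate solution to the Most Cohesive Cluster problem on (N_t, ⌈n/k⌉), let i_t be an agent of S_t minimizing ℓ_i(C(i)) over i ∈ S_t, and set N_{t+1} = N_t \ {i_t}. Let θ = max over all iterations t of (min_{j∈S_t} ℓ_j(C(j))) / (max_{i∈S_t} ℓ_i(S_t)). Then θ ≤ ρ ≤ λ·θ. -/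
open scoped Classical

/-- `S` is a `lam`-approximate solution to the Most Cohesive Cluster problem on `(N', τ)`. -/
def ApproxMCC {n : ℕ} (lam : ℝ) (ℓ : Fin n → Finset (Fin n) → ℝ)
    (N' : Finset (Fin n)) (τ : ℕ) (S : Finset (Fin n)) : Prop :=
  S ⊆ N' ∧ τ ≤ S.card ∧
  ∀ S' ⊆ N', τ ≤ S'.card →
    maxOver S (fun i => ℓ i S) ≤ lam * maxOver S' (fun i => ℓ i S')

/-! Take a group `S` with `|S| ≥ n/k`. The process stops only below `n/k` agents, so some agent
of `S` is removed; at the first such step `t` the group `S` still lies in `N_t`, so the cluster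
`S_t` is within a factor `λ` of the cohesion of `S`, and the removed agent `i_t ∈ S` has the
least loss under `C` in `S_t`. Hence the ratio of `S` is at most `λ` times that of `S_t`.
Conversely, each `S_t` is itself a candidate in the definition of `ρ`. -/

section MaxMin

variable {ι : Type*} {S : Finset ι} {f : ι → ℝ}

theorem le_maxOver_s12 (f : ι → ℝ) {a : ι} (ha : a ∈ S) : f a ≤ maxOver S f := by
  rw [maxOver, dif_pos ⟨a, ha⟩]
  exact Finset.le_sup' f ha

theorem maxOver_le {b : ℝ} (hb : 0 ≤ b) (h : ∀ a ∈ S, f a ≤ b) : maxOver S f ≤ b := by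
  rw [maxOver]
  split
  · exact Finset.sup'_le _ _ h
  · exact hb

theorem maxOver_nonneg (h : ∀ a ∈ S, 0 ≤ f a) : 0 ≤ maxOver S f := by
  rw [maxOver]
  split
  · obtain ⟨a, ha⟩ := ‹S.Nonempty›
    exact (h a ha).trans (Finset.le_sup' f ha)
  · exact le_rfl

theorem maxOver_pos {a : ι} (ha : a ∈ S) (h : ∀ a ∈ S, 0 < f a) : 0 < maxOver S f :=
  (h a ha).trans_le (le_maxOver_s12 f ha)

theorem minOver_le_s12 {a : ι} (ha : a ∈ S) : minOver S f ≤ f a := by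
  rw [minOver, dif_pos ⟨a, ha⟩]
  exact Finset.inf'_le f ha

theorem le_minOver {b : ℝ} (hS : S.Nonempty) (h : ∀ a ∈ S, b ≤ f a) :
    b ≤ minOver S f := by
  rw [minOver, dif_pos hS]
  exact Finset.le_inf' _ _ h

theorem minOver_nonneg (h : ∀ a ∈ S, 0 ≤ f a) : 0 ≤ minOver S f := by
  rw [minOver]
  split
  · exact Finset.le_inf' _ _ h
  · exact le_rfl

end MaxMin

theorem exists_first_removal {α : Type*} [DecidableEq α] {N : ℕ → Finset α} {x : ℕ → α}
    {T : ℕ} (hN : ∀ t < T, N (t + 1) = N t \ {x t}) {S : Finset α} (hS : S ⊆ N 0)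
    (hST : ¬ S ⊆ N T) : ∃ t < T, x t ∈ S ∧ S ⊆ N t := by
  induction T with
  | zero => exact absurd hS hST
  | succ T ih =>
    by_cases hSN : S ⊆ N T
    · refine ⟨T, T.lt_succ_self, ?_, hSN⟩
      by_contra hx
      rw [hN T T.lt_succ_self] at hST
      exact hST fun i hi =>
        Finset.mem_sdiff.2 ⟨hSN hi, Finset.notMem_singleton.2 fun h => hx (h ▸ hi)⟩
    · obtain ⟨t, ht, hxt⟩ := ih (fun t ht => hN t (ht.trans T.lt_succ_self)) hSN
      exact ⟨t, ht.trans T.lt_succ_self, hxt⟩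

section FJRRatio

variable {n k : ℕ} {ℓ : Fin n → Finset (Fin n) → ℝ} {C : Fin n → Fin k}

noncomputable def fjrRatio (ℓ : Fin n → Finset (Fin n) → ℝ) (C : Fin n → Fin k)
    (S : Finset (Fin n)) : ℝ :=
  minOver S (fun j => ℓ j (clusterOf C j)) / maxOver S (fun i => ℓ i S)

theorem mem_clusterOf_self (C : Fin n → Fin k) (i : Fin n) : i ∈ clusterOf C i := by
  simp [clusterOf]

theorem fjrRatio_nonneg (hℓ : ∀ i S, i ∈ S → 0 < ℓ i S) (S : Finset (Fin n)) :
    0 ≤ fjrRatio ℓ C S :=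
  div_nonneg (minOver_nonneg fun j _ => (hℓ j _ (mem_clusterOf_self C j)).le)
    (maxOver_nonneg fun i hi => (hℓ i S hi).le)

theorem fjrRatio_le_mul_of_mem (hℓ : ∀ i S, i ∈ S → 0 < ℓ i S) {lam : ℝ}
    {S S' : Finset (Fin n)} {i : Fin n} (hiS : i ∈ S) (hiS' : i ∈ S')
    (hi : ∀ j ∈ S', ℓ i (clusterOf C i) ≤ ℓ j (clusterOf C j))
    (hmax : maxOver S' (fun j => ℓ j S') ≤ lam * maxOver S (fun j => ℓ j S)) :
    fjrRatio ℓ C S ≤ lam * fjrRatio ℓ C S' := by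
  set a := minOver S (fun j => ℓ j (clusterOf C j))
  set c := minOver S' (fun j => ℓ j (clusterOf C j))
  have hac : a ≤ c := (minOver_le_s12 hiS).trans (le_minOver ⟨i, hiS'⟩ hi)
  have hc : 0 ≤ c := minOver_nonneg fun j _ => (hℓ j _ (mem_clusterOf_self C j)).le
  have hb : 0 < maxOver S (fun j => ℓ j S) := maxOver_pos hiS fun j hj => hℓ j S hj
  have hm : 0 < maxOver S' (fun j => ℓ j S') := maxOver_pos hiS' fun j hj => hℓ j S' hj
  rw [fjrRatio, fjrRatio, ← mul_div_assoc, div_le_div_iff₀ hb hm]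
  calc a * maxOver S' (fun j => ℓ j S') ≤ c * (lam * maxOver S (fun j => ℓ j S)) :=
        mul_le_mul hac hmax hm.le hc
    _ = lam * c * maxOver S (fun j => ℓ j S) := by ring

end FJRRatio

theorem stmt12_general (n k : ℕ) (lam : ℝ) (hlam : 1 ≤ lam)
    (ℓ : Fin n → Finset (Fin n) → ℝ) (hℓ : ∀ i S, i ∈ S → 0 < ℓ i S)
    (C : Fin n → Fin k)
    (T : ℕ) (Ns : ℕ → Finset (Fin n)) (Ss : ℕ → Finset (Fin n)) (is : ℕ → Fin n)
    (hN0 : Ns 0 = Finset.univ)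
    (hstop : ((Ns T).card : ℝ) < (n : ℝ) / k)
    (hSt : ∀ t < T, ApproxMCC lam ℓ (Ns t) ⌈(n : ℝ) / k⌉₊ (Ss t))
    (hit : ∀ t < T, is t ∈ Ss t ∧
      ∀ i ∈ Ss t, ℓ (is t) (clusterOf C (is t)) ≤ ℓ i (clusterOf C i))
    (hNs : ∀ t < T, Ns (t + 1) = Ns t \ {is t}) :
    maxOver (Finset.range T) (fun t =>
        minOver (Ss t) (fun j => ℓ j (clusterOf C j)) /
          maxOver (Ss t) (fun i => ℓ i (Ss t))) ≤
      maxOver (Finset.univ.filter (fun S : Finset (Fin n) => (n : ℝ) / k ≤ S.card)) (fun S =>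
        minOver S (fun j => ℓ j (clusterOf C j)) / maxOver S (fun i => ℓ i S)) ∧
    maxOver (Finset.univ.filter (fun S : Finset (Fin n) => (n : ℝ) / k ≤ S.card)) (fun S =>
        minOver S (fun j => ℓ j (clusterOf C j)) / maxOver S (fun i => ℓ i S)) ≤
      lam * maxOver (Finset.range T) (fun t =>
        minOver (Ss t) (fun j => ℓ j (clusterOf C j)) /
          maxOver (Ss t) (fun i => ℓ i (Ss t))) := by
  change maxOver _ (fun t => fjrRatio ℓ C (Ss t)) ≤ maxOver _ (fjrRatio ℓ C) ∧
    maxOver _ (fjrRatio ℓ C) ≤ lam * maxOver _ (fun t => fjrRatio ℓ C (Ss t))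
  have hθ : 0 ≤ maxOver (Finset.range T) (fun t => fjrRatio ℓ C (Ss t)) :=
    maxOver_nonneg fun t _ => fjrRatio_nonneg hℓ (Ss t)
  refine ⟨maxOver_le (maxOver_nonneg fun S _ => fjrRatio_nonneg hℓ S) fun t ht => ?_,
    maxOver_le (mul_nonneg (by linarith) hθ) fun S hS => ?_⟩
  · have hcard := (hSt t (Finset.mem_range.1 ht)).2.1
    exact le_maxOver_s12 (fjrRatio ℓ C)
      (Finset.mem_filter.2 ⟨Finset.mem_univ _, Nat.ceil_le.1 hcard⟩)
  · have hScard : (n : ℝ) / k ≤ S.card := (Finset.mem_filter.1 hS).2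
    have hSN : ¬ S ⊆ Ns T := fun h =>
      hstop.not_ge (hScard.trans (by exact_mod_cast Finset.card_le_card h))
    obtain ⟨t, ht, hiS, hSNt⟩ :=
      exists_first_removal hNs (hN0 ▸ Finset.subset_univ S) hSN
    obtain ⟨hiSt, hmin⟩ := hit t ht
    calc fjrRatio ℓ C S ≤ lam * fjrRatio ℓ C (Ss t) :=
          fjrRatio_le_mul_of_mem hℓ hiS hiSt hmin
            ((hSt t ht).2.2 S hSNt (Nat.ceil_le.2 hScard))
      _ ≤ lam * maxOver (Finset.range T) (fun t => fjrRatio ℓ C (Ss t)) := by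
          gcongr
          exact le_maxOver_s12 (fun t => fjrRatio ℓ C (Ss t)) (Finset.mem_range.2 ht)

/-- Correctness of the FJR auditing algorithm: with strictly positive losses, a clustering `C`,
and the iterative process `N_0 = N`; while `|N_t| ≥ n/k`, `S_t` is a `lam`-approximate most
cohesive cluster on `(N_t, ⌈n/k⌉)`, `i_t ∈ S_t` minimizes `ℓ_i(C(i))` over `S_t`, and
`N_{t+1} = N_t \ {i_t}` — the returned estimate
`θ = max_t (min_{j ∈ S_t} ℓ_j(C(j))) / (max_{i ∈ S_t} ℓ_i(S_t))` satisfies `θ ≤ ρ ≤ lam·θ`,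
where `ρ = max_{S ⊆ N, |S| ≥ n/k} (min_{j ∈ S} ℓ_j(C(j))) / (max_{i ∈ S} ℓ_i(S))` is the
exact FJR approximation of `C`. -/
theorem stmt12 (n k : ℕ) (hk : 1 ≤ k) (hkn : k ≤ n) (lam : ℝ) (hlam : 1 ≤ lam)
    (ℓ : Fin n → Finset (Fin n) → ℝ) (hℓ : ∀ i S, i ∈ S → 0 < ℓ i S)
    (C : Fin n → Fin k)
    (T : ℕ) (Ns : ℕ → Finset (Fin n)) (Ss : ℕ → Finset (Fin n)) (is : ℕ → Fin n)
    (hN0 : Ns 0 = Finset.univ)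
    (hloop : ∀ t < T, (n : ℝ) / k ≤ (Ns t).card)
    (hstop : ((Ns T).card : ℝ) < (n : ℝ) / k)
    (hSt : ∀ t < T, ApproxMCC lam ℓ (Ns t) ⌈(n : ℝ) / k⌉₊ (Ss t))
    (hit : ∀ t < T, is t ∈ Ss t ∧
      ∀ i ∈ Ss t, ℓ (is t) (clusterOf C (is t)) ≤ ℓ i (clusterOf C i))
    (hNs : ∀ t < T, Ns (t + 1) = Ns t \ {is t}) :
    maxOver (Finset.range T) (fun t =>
        minOver (Ss t) (fun j => ℓ j (clusterOf C j)) /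
          maxOver (Ss t) (fun i => ℓ i (Ss t))) ≤
      maxOver (Finset.univ.filter (fun S : Finset (Fin n) => (n : ℝ) / k ≤ S.card)) (fun S =>
        minOver S (fun j => ℓ j (clusterOf C j)) / maxOver S (fun i => ℓ i S)) ∧
    maxOver (Finset.univ.filter (fun S : Finset (Fin n) => (n : ℝ) / k ≤ S.card)) (fun S =>
        minOver S (fun j => ℓ j (clusterOf C j)) / maxOver S (fun i => ℓ i S)) ≤
      lam * maxOver (Finset.range T) (fun t =>
        minOver (Ss t) (fun j => ℓ j (clusterOf C j)) /
          maxOver (Ss t) (fun i => ℓ i (Ss t))) :=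
  stmt12_general n k lam hlam ℓ hℓ C T Ns Ss is hN0 hstop hSt hit hNs
end
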